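/- Let q be odd, σ : F_q → F_q a permutation, and x = (j, σ(j)) a point of Γ_σ participating in no collinear quadruple. For i = 1,2,3, let M_i be the set of slopes m ∈ F_q* such that the line through x with slope m contains exactly i points of Γ_σ. Then |M_1| = |M_3| and ∏_{m ∈ M_1} m = -∏_{m ∈ M_3} m. -/

import Mathlib

/-!
Each point `(i, σ i)` with `i ≠ j` lies on exactly one line through `x = (j, σ j)`, the one whose
slope `(σ i - σ j) / (i - j)` is nonzero because `σ` is injective; so the line of slope `m` carries
`c m - 1` of them, `c m` being its number of points. Counting these points gives
`∑_{m ≠ 0} (c m - 1) = q - 1`, and multiplying their slopes gives `∏_{m ≠ 0} m ^ (c m - 1) = 1`,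
since both the numerators `σ i - σ j` and the denominators `i - j` run over `F*`. Against
`|F*| = q - 1` and Wilson's `∏_{m ≠ 0} m = -1` this reads `∑_{m ≠ 0} (c m - 2) = 0` and
`∏_{m ≠ 0} m ^ (c m - 2) = -1`. As `c m ∈ {1, 2, 3}`, the exponent `c m - 2` is `-1` on `M₁`,
`1` on `M₃` and `0` otherwise, so these identities are `|M₃| - |M₁| = 0` and
`∏_{M₃} m / ∏_{M₁} m = -1`.
-/

/-- Number of points of the graph of `σ` on the line through `x` of slope `m`. -/
def lineCount {F : Type*} [Field F] [Fintype F] [DecidableEq F]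
    (σ : F → F) (x : F × F) (m : F) : ℕ :=
  (Finset.univ.filter (fun i : F => σ i - x.2 = m * (i - x.1))).card

open Finset Function

namespace Finset

@[to_additive sum_zsmul_eq_sub_of_abs_le_one]
lemma prod_zpow_eq_div_of_abs_le_one {α M : Type*} [DivisionCommMonoid M]
    (s : Finset α) (f : α → M) (g : α → ℤ) (hg : ∀ x ∈ s, |g x| ≤ 1) :
    ∏ x ∈ s, f x ^ g x = (∏ x ∈ s with g x = 1, f x) / ∏ x ∈ s with g x = -1, f x := by
  rw [prod_filter, prod_filter, ← prod_div_distrib]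
  refine prod_congr rfl fun x hx => ?_
  obtain h | h | h : g x = -1 ∨ g x = 0 ∨ g x = 1 := by have := abs_le.mp (hg x hx); omega
  all_goals simp [h]

end Finset

theorem FiniteField.prod_erase_zero_eq_neg_one (F : Type*) [Field F] [Fintype F] [DecidableEq F] :
    ∏ x ∈ univ.erase (0 : F), x = -1 := by
  rw [prod_subtype _ (p := (· ≠ 0)) (fun _ => by simp) (fun x => x),
    ← Fintype.prod_equiv unitsEquivNeZero (fun u => (u : F)) _ (fun _ => rfl),
    ← Units.coe_prod, prod_univ_units_id_eq_neg_one, Units.val_neg, Units.val_one]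

section

variable {F : Type*} [Field F] [Fintype F] [DecidableEq F]

theorem FiniteField.prod_erase_sub_eq_neg_one {f : F → F} (hf : Bijective f) (a : F) :
    ∏ i ∈ univ.erase a, (f i - f a) = -1 := by
  let e : F ≃ F := (Equiv.ofBijective f hf).trans (Equiv.subRight (f a))
  have he : e a = 0 := sub_self _
  rw [← FiniteField.prod_erase_zero_eq_neg_one F]
  exact prod_equiv e (by simp [← he, e.injective.eq_iff]) fun _ _ => rfl

section lineCount

variable (σ : F → F) (j : F)

theorem card_filter_slope_add_one_eq_lineCount (m : F) :
    #{i ∈ univ.erase j | slope σ j i = m} + 1 = lineCount σ (j, σ j) m := by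
  have hfiber : {i ∈ univ.erase j | slope σ j i = m}
      = (univ.filter fun i => σ i - σ j = m * (i - j)).erase j := by
    ext i
    rcases eq_or_ne i j with rfl | hij
    · simp
    · simp [hij, slope_def_field, div_eq_iff (sub_ne_zero.mpr hij)]
  rw [hfiber, card_erase_add_one (by simp)]
  rfl

variable {σ j}

theorem slope_mem_erase_zero (hσ : Injective σ) {i : F} (hi : i ∈ univ.erase j) :
    slope σ j i ∈ univ.erase 0 := by
  have hij : i ≠ j := ne_of_mem_erase hi
  simpa [slope_def_field, sub_eq_zero, hij] using hσ.ne hij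

theorem sum_lineCount_sub_two_eq_zero (hσ : Injective σ) :
    ∑ m ∈ univ.erase 0, ((lineCount σ (j, σ j) m : ℤ) - 2) = 0 :=
  calc ∑ m ∈ univ.erase 0, ((lineCount σ (j, σ j) m : ℤ) - 2)
      = ∑ m ∈ univ.erase 0, ((#{i ∈ univ.erase j | slope σ j i = m} : ℤ) - 1) := by
        refine sum_congr rfl fun m _ => ?_
        rw [← card_filter_slope_add_one_eq_lineCount]
        push_cast
        ring
    _ = #(univ.erase j) - #(univ.erase (0 : F)) := by
        rw [sum_sub_distrib, card_eq_sum_card_fiberwise fun _ => slope_mem_erase_zero hσ]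
        simp
    _ = 0 := by simp [card_erase_of_mem]

theorem prod_zpow_lineCount_sub_two_eq_neg_one (hσ : Bijective σ) :
    ∏ m ∈ univ.erase 0, m ^ ((lineCount σ (j, σ j) m : ℤ) - 2) = -1 := by
  have hslopes : ∏ i ∈ univ.erase j, slope σ j i = 1 := by
    simp_rw [slope_def_field]
    have hid : ∏ i ∈ univ.erase j, (i - j) = -1 :=
      FiniteField.prod_erase_sub_eq_neg_one bijective_id j
    rw [prod_div_distrib, FiniteField.prod_erase_sub_eq_neg_one hσ, hid, div_self (by norm_num)]
  calc ∏ m ∈ univ.erase 0, m ^ ((lineCount σ (j, σ j) m : ℤ) - 2)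
      = ∏ m ∈ univ.erase 0, m ^ #{i ∈ univ.erase j | slope σ j i = m} / m := by
        refine prod_congr rfl fun m hm => ?_
        rw [← card_filter_slope_add_one_eq_lineCount, div_eq_mul_inv, ← zpow_natCast,
          ← zpow_sub_one₀ (ne_of_mem_erase hm)]
        push_cast
        congr 1
        ring
    _ = (∏ i ∈ univ.erase j, slope σ j i) / ∏ m ∈ univ.erase (0 : F), m := by
        rw [prod_div_distrib,
          ← prod_fiberwise_of_maps_to (fun _ => slope_mem_erase_zero hσ.1) (slope σ j)]
        congr 1
        exact prod_congr rfl fun m _ => (prod_eq_pow_card fun i hi => (mem_filter.mp hi).2).symm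
    _ = -1 := by rw [hslopes, FiniteField.prod_erase_zero_eq_neg_one]; norm_num

end lineCount

end

theorem M1_card_eq_M3_card_and_prod_general {F : Type*} [Field F] [Fintype F] [DecidableEq F]
    (σ : F → F) (hσ : Function.Bijective σ) (j : F)
    (hquad : ∀ m : F, m ≠ 0 → lineCount σ (j, σ j) m ≤ 3) :
    (Finset.univ.filter (fun m : F => m ≠ 0 ∧ lineCount σ (j, σ j) m = 1)).card =
      (Finset.univ.filter (fun m : F => m ≠ 0 ∧ lineCount σ (j, σ j) m = 3)).card ∧
    ∏ m ∈ Finset.univ.filter (fun m : F => m ≠ 0 ∧ lineCount σ (j, σ j) m = 1), m =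
      - ∏ m ∈ Finset.univ.filter (fun m : F => m ≠ 0 ∧ lineCount σ (j, σ j) m = 3), m := by
  set e : F → ℤ := fun m => (lineCount σ (j, σ j) m : ℤ) - 2
  have he : ∀ m ∈ univ.erase 0, |e m| ≤ 1 := by
    intro m hm
    have := card_filter_slope_add_one_eq_lineCount σ j m
    have := hquad m (ne_of_mem_erase hm)
    rw [abs_le]
    simp only [e]
    omega
  have hM : ∀ k : ℕ, univ.filter (fun m : F => m ≠ 0 ∧ lineCount σ (j, σ j) m = k)
      = {m ∈ univ.erase (0 : F) | e m = k - 2} := by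
    intro k
    ext m
    simp only [mem_filter, mem_univ, mem_erase, true_and, and_true, e]
    exact and_congr_right fun _ => by omega
  have hsum : ∑ m ∈ univ.erase 0, e m = 0 := sum_lineCount_sub_two_eq_zero hσ.1
  have hcard := sum_zsmul_eq_sub_of_abs_le_one _ (fun _ => (1 : ℤ)) e he
  simp only [smul_eq_mul, mul_one, sum_const, nsmul_eq_mul, hsum] at hcard
  have hprod :
      (∏ m ∈ univ.erase 0 with e m = 1, m) / ∏ m ∈ univ.erase 0 with e m = -1, m = -1 := by
    rw [← prod_zpow_lineCount_sub_two_eq_neg_one hσ]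
    exact (prod_zpow_eq_div_of_abs_le_one _ id e he).symm
  have hne : ∏ m ∈ univ.erase 0 with e m = -1, m ≠ 0 :=
    prod_ne_zero_iff.mpr fun m hm => ne_of_mem_erase (mem_filter.mp hm).1
  rw [hM 1, hM 3]
  norm_num
  constructor
  · omega
  · rw [div_eq_iff hne] at hprod
    linear_combination hprod

/-- If `x = (j, σ j)` participates in no collinear quadruple (every line through
`x` of nonzero slope meets the graph in at most 3 points), and `M i` is the set of
nonzero slopes whose line through `x` meets the graph in exactly `i` points, then
`|M 1| = |M 3|` and `∏_{m ∈ M 1} m = - ∏_{m ∈ M 3} m`. -/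
theorem M1_card_eq_M3_card_and_prod {F : Type*} [Field F] [Fintype F] [DecidableEq F]
    (hq : Odd (Fintype.card F)) (σ : F → F) (hσ : Function.Bijective σ) (j : F)
    (hquad : ∀ m : F, m ≠ 0 → lineCount σ (j, σ j) m ≤ 3) :
    (Finset.univ.filter (fun m : F => m ≠ 0 ∧ lineCount σ (j, σ j) m = 1)).card =
      (Finset.univ.filter (fun m : F => m ≠ 0 ∧ lineCount σ (j, σ j) m = 3)).card ∧
    ∏ m ∈ Finset.univ.filter (fun m : F => m ≠ 0 ∧ lineCount σ (j, σ j) m = 1), m =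
      - ∏ m ∈ Finset.univ.filter (fun m : F => m ≠ 0 ∧ lineCount σ (j, σ j) m = 3), m :=
  M1_card_eq_M3_card_and_prod_general σ hσ j hquad
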